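/- arXiv:2510.11266 — 3 statements merged into one kernel-verified Lean document; each statement's English description precedes it below -/
import Mathlib

section
/- Calculus key inequality: let g : ℝ_{≥0} → ℝ_{≥0} be differentiable, concave, non-decreasing with g(0) = 0. Then ∫₀¹ e^t ((1+t)·g(1/t) − (1/t)·g'(1/t)) dt ≤ e·g(1). -/
/-! The integrand is the derivative of `H t = t * exp t * g (1/t)` on `(0, 1]`, so the integral is
`H 1 - lim_{ε → 0⁺} H ε`, and `H ≥ 0` there because `g ≥ 0`; `H 1 = e * g 1`. -/

open Set Filter Topology

theorem intervalIntegral_le_of_hasDerivAt_of_nonneg {f F : ℝ → ℝ} {a b : ℝ} (hab : a < b)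
    (hF : ∀ t ∈ Ioc a b, HasDerivAt F (f t) t) (hF_nonneg : ∀ t ∈ Ioc a b, 0 ≤ F t) :
    ∫ t in a..b, f t ≤ F b := by
  by_cases hf : IntervalIntegrable f MeasureTheory.volume a b
  swap
  · -- a non-integrable `f` has integral `0` by convention
    rw [intervalIntegral.integral_undef hf]
    exact hF_nonneg b (right_mem_Ioc.mpr hab)
  have hprimitive : Tendsto (fun x => ∫ t in x..b, f t) (𝓝[>] a) (𝓝 (∫ t in a..b, f t)) := by
    have hcont := intervalIntegral.continuousOn_primitive_interval_left
      ((intervalIntegrable_iff').mp hf)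
    rw [← nhdsWithin_Ioo_eq_nhdsGT hab]
    exact (hcont a left_mem_uIcc).mono_left
      (nhdsWithin_mono a (Ioo_subset_Icc_self.trans_eq (uIcc_of_le hab.le).symm))
  refine le_of_tendsto hprimitive ?_
  filter_upwards [Ioo_mem_nhdsGT hab] with ε ⟨haε, hεb⟩
  have hεb' : Icc ε b ⊆ Ioc a b := Icc_subset_Ioc_iff hεb.le |>.mpr ⟨haε, le_rfl⟩
  rw [intervalIntegral.integral_eq_sub_of_hasDerivAt
    (fun t ht => hF t (hεb' (uIcc_of_le hεb.le ▸ ht)))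
    (hf.mono_set (uIcc_subset_uIcc (by simp [uIcc_of_le hab.le, haε.le, hεb.le]) right_mem_uIcc))]
  linarith [hF_nonneg ε ⟨haε, hεb.le⟩]

theorem hasDerivAt_mul_exp_mul_comp_one_div {g : ℝ → ℝ} {t : ℝ} (ht : t ≠ 0)
    (hg : DifferentiableAt ℝ g (1 / t)) :
    HasDerivAt (fun x => x * Real.exp x * g (1 / x))
      (Real.exp t * ((1 + t) * g (1 / t) - (1 / t) * deriv g (1 / t))) t := by
  have hinv : HasDerivAt (fun x : ℝ => 1 / x) (-(t ^ 2)⁻¹) t := by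
    simpa only [one_div] using hasDerivAt_inv ht
  refine (((hasDerivAt_id' t).mul (Real.hasDerivAt_exp t)).mul
    (hg.hasDerivAt.comp t hinv)).congr_deriv ?_
  simp only [Pi.mul_apply, Function.comp_apply]
  field_simp
  ring

theorem stmt9_general (g : ℝ → ℝ)
    (hnonneg : ∀ u : ℝ, 0 ≤ u → 0 ≤ g u)
    (hdiff : ∀ u : ℝ, 0 ≤ u → DifferentiableAt ℝ g u) :
    ∫ t in (0:ℝ)..1, Real.exp t * ((1 + t) * g (1/t) - (1/t) * deriv g (1/t))
      ≤ Real.exp 1 * g 1 := by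
  have hH : ∀ t ∈ Ioc (0:ℝ) 1, HasDerivAt (fun x => x * Real.exp x * g (1 / x))
      (Real.exp t * ((1 + t) * g (1 / t) - (1 / t) * deriv g (1 / t))) t := fun t ht =>
    hasDerivAt_mul_exp_mul_comp_one_div ht.1.ne' (hdiff _ (one_div_nonneg.mpr ht.1.le))
  have hH_nonneg : ∀ t ∈ Ioc (0:ℝ) 1, 0 ≤ t * Real.exp t * g (1 / t) := fun t ht =>
    mul_nonneg (mul_nonneg ht.1.le (Real.exp_pos t).le) (hnonneg _ (one_div_nonneg.mpr ht.1.le))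
  simpa using intervalIntegral_le_of_hasDerivAt_of_nonneg zero_lt_one hH hH_nonneg

theorem stmt9 (g : ℝ → ℝ)
    (hconc : ConcaveOn ℝ (Set.Ici (0:ℝ)) g)
    (hmono : MonotoneOn g (Set.Ici (0:ℝ)))
    (hnonneg : ∀ u : ℝ, 0 ≤ u → 0 ≤ g u)
    (hdiff : ∀ u : ℝ, 0 ≤ u → DifferentiableAt ℝ g u)
    (hg0 : g 0 = 0) :
    ∫ t in (0:ℝ)..1, Real.exp t * ((1 + t) * g (1/t) - (1/t) * deriv g (1/t))
      ≤ Real.exp 1 * g 1 :=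
  stmt9_general g hnonneg hdiff
end

section
/- Let f : ℝ_{≥0}^m → ℝ_{≥0} be a differentiable CDR-valuation (concave, monotone non-decreasing, f(0)=0, ∇f coordinatewise non-increasing), define f̂(α) = sup_{x ≥ 0}(f(x) − ⟨α,x⟩) and U(x) = (1/(e−1)) ∫₀¹ e^t · t·f(x/t) dt. Then for all x ∈ ℝ_{≥0}^m: (e/(e−1))·f(x) ≥ U(x) + f̂(∇U(x)). That is, U is (1 − 1/e)-balanced with respect to f. -/
open RealInnerProductSpace Set Filter Topology MeasureTheory Real

noncomputable section

/-!
Write `I F x = ∫₀¹ eᵗ t F(x/t) dt`, so that `U = I f / (e - 1)`. The gradient of `U` is only known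
through its difference quotients, so instead of the paper's Jensen step we work at `z = x + s y`
and let `s → 0⁺` at the end. For `0 < t < 1`, the tangent inequalities of the concave `f` at `z/t`,
towards `x/t` and towards `y`, add up to
`f y - t (f(z/t) - f(x/t)) / s ≤ f(z/t) - ⟪∇f(z/t), z/t⟫`.
Integrating against `eᵗ dt` and adding `I f z`, the right side becomes, with `g u = f(u z)`,
`∫₀¹ eᵗ ((1 + t) g(1/t) - g'(1/t) / t) dt`, the integral of the derivative of `t ↦ eᵗ t g(1/t)`.
That derivative is nonnegative and `t g(1/t)` has a nonnegative limit at `0⁺`, so the integral is at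
most `e g(1) = e f z`. Hence `(e - 1) f y - (I f z - I f x) / s ≤ e f z - I f z`; in the limit the
difference quotient becomes `(e - 1) ⟪∇U(x), y⟫`, and the supremum over `y` bounds `f̂(∇U(x))`.
-/

section Gradient

variable {E : Type*} [NormedAddCommGroup E] [InnerProductSpace ℝ E] [CompleteSpace E]

lemma HasGradientAt.hasDerivAt_comp {F : E → ℝ} {g : E} {γ : ℝ → E} {γ' : E} {s : ℝ}
    (hF : HasGradientAt F g (γ s)) (hγ : HasDerivAt γ γ' s) :
    HasDerivAt (fun r => F (γ r)) ⟪g, γ'⟫ s := by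
  have h := hF.hasFDerivAt.comp_hasDerivAt s hγ
  rwa [InnerProductSpace.toDual_apply_apply] at h

lemma ConcaveOn.le_add_inner_of_hasGradientAt {S : Set E} {F : E → ℝ} (hF : ConcaveOn ℝ S F)
    {a b g : E} (ha : a ∈ S) (hb : b ∈ S) (hg : HasGradientAt F g a) :
    F b ≤ F a + ⟪g, b - a⟫ := by
  have hd : HasDerivAt (F ∘ AffineMap.lineMap a b) ⟪g, b - a⟫ (0 : ℝ) :=
    HasGradientAt.hasDerivAt_comp (by simpa using hg) AffineMap.hasDerivAt_lineMap
  have := (hF.comp_affineMap (AffineMap.lineMap a b)).slope_le_of_hasDerivAt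
    (by simpa using ha) (by simpa using hb) one_pos hd
  simp [slope] at this
  linarith

end Gradient

lemma intervalIntegrable_deriv_of_nonneg_of_tendsto {G G' : ℝ → ℝ} {a b L : ℝ} (hab : a ≤ b)
    (hcont : ContinuousOn G (Ioc a b)) (hderiv : ∀ t ∈ Ioo a b, HasDerivAt G (G' t) t)
    (hpos : ∀ t ∈ Ioo a b, 0 ≤ G' t) (ha : Tendsto G (𝓝[>] a) (𝓝 L)) :
    IntervalIntegrable G' volume a b := by
  classical
  have hcont' : ContinuousOn (Function.update G a L) (uIcc a b) := by
    rw [uIcc_of_le hab]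
    intro t ht
    rcases ht.1.eq_or_lt with rfl | hat
    · exact continuousWithinAt_update_same.2 <|
        ha.mono_left <| nhdsWithin_mono _ fun u hu => lt_of_le_of_ne hu.1.1 (Ne.symm hu.2)
    · rw [continuousWithinAt_update_of_ne hat.ne']
      refine (hcont t ⟨hat, ht.2⟩).mono_of_mem_nhdsWithin ?_
      exact mem_of_superset (inter_mem_nhdsWithin _ (Ioi_mem_nhds hat))
        fun u hu => ⟨hu.2, hu.1.2⟩
  have hI : Ioo (min a b) (max a b) = Ioo a b := by rw [min_eq_left hab, max_eq_right hab]
  refine intervalIntegral.intervalIntegrable_deriv_of_nonneg hcont' (fun t ht => ?_) (hI ▸ hpos)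
  rw [hI] at ht
  refine (hderiv t ht).congr_of_eventuallyEq ?_
  filter_upwards [eventually_ne_nhds ht.1.ne'] with u hu using Function.update_of_ne hu _ _

section Perspective

variable {φ φ' : ℝ → ℝ}

lemma ConcaveOn.monotoneOn_mul_apply_inv (hφ : ConcaveOn ℝ (Ici 0) φ) (hφ0 : φ 0 = 0) :
    MonotoneOn (fun t => t * φ t⁻¹) (Ioi 0) := by
  intro t₁ (h₁ : 0 < t₁) t₂ (h₂ : 0 < t₂) h12
  have := hφ.neg.secant_mono (a := 0) self_mem_Ici (inv_pos.2 h₂).le (inv_pos.2 h₁).le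
    (inv_pos.2 h₂).ne' (inv_pos.2 h₁).ne' (inv_anti₀ h₁ h12)
  simp only [Pi.neg_apply, hφ0, neg_zero, sub_zero, div_inv_eq_mul] at this
  linarith

lemma ConcaveOn.intervalIntegrable_exp_mul_mul_apply_inv (hφ : ConcaveOn ℝ (Ici 0) φ)
    (hφ0 : φ 0 = 0) (hφnn : ∀ u, 1 ≤ u → 0 ≤ φ u) :
    IntervalIntegrable (fun t => exp t * (t * φ t⁻¹)) volume 0 1 := by
  have hnn : ∀ t ∈ Icc (0:ℝ) 1, 0 ≤ t * φ t⁻¹ := by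
    rintro t ⟨ht0, ht1⟩
    rcases ht0.eq_or_lt with rfl | hpos
    · simp
    · exact mul_nonneg ht0 (hφnn _ ((one_le_inv₀ hpos).2 ht1))
  have hmono : MonotoneOn (fun t => t * φ t⁻¹) (Icc 0 1) := by
    intro t₁ h₁ t₂ h₂ h12
    rcases h₁.1.eq_or_lt with rfl | hpos
    · simpa using hnn t₂ h₂
    · exact hφ.monotoneOn_mul_apply_inv hφ0 hpos (hpos.trans_le h12) h12
  refine MonotoneOn.intervalIntegrable ?_
  rw [uIcc_of_le zero_le_one]
  exact (exp_monotone.monotoneOn _).mul hmono (fun _ _ => (exp_pos _).le) hnn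

lemma ConcaveOn.exists_tendsto_mul_apply_inv_nhdsGT_zero (hφ : ConcaveOn ℝ (Ici 0) φ)
    (hφ0 : φ 0 = 0) (hφnn : ∀ u, 1 ≤ u → 0 ≤ φ u) :
    ∃ L, 0 ≤ L ∧ Tendsto (fun t => t * φ t⁻¹) (𝓝[>] 0) (𝓝 L) := by
  have hnn : ∀ t ∈ Ioo (0:ℝ) 1, 0 ≤ t * φ t⁻¹ := fun t ht =>
    mul_nonneg ht.1.le (hφnn _ ((one_le_inv₀ ht.1).2 ht.2.le))
  refine ⟨_, le_csInf ((nonempty_Ioo.2 one_pos).image _) ?_,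
    MonotoneOn.tendsto_nhdsWithin_Ioo_right (nonempty_Ioo.2 one_pos)
      ((hφ.monotoneOn_mul_apply_inv hφ0).mono Ioo_subset_Ioi_self) ⟨0, ?_⟩⟩ <;>
  · rintro _ ⟨t, ht, rfl⟩
    exact hnn t ht

lemma hasDerivAt_exp_mul_mul_apply_inv {t : ℝ} (ht : t ≠ 0) (hφ' : HasDerivAt φ (φ' t⁻¹) t⁻¹) :
    HasDerivAt (fun t => exp t * (t * φ t⁻¹)) (exp t * ((1 + t) * φ t⁻¹ - t⁻¹ * φ' t⁻¹)) t := by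
  refine ((hasDerivAt_exp t).mul ((hasDerivAt_id t).mul
    (hφ'.comp t (hasDerivAt_inv ht)))).congr_deriv ?_
  simp only [Pi.mul_apply, Function.comp_apply, id]
  field_simp
  ring

theorem ConcaveOn.integral_exp_mul_deriv_perspective_le (hφ : ConcaveOn ℝ (Ici 0) φ)
    (hφ0 : φ 0 = 0) (hφnn : ∀ u, 1 ≤ u → 0 ≤ φ u) (hφ' : ∀ u, 1 ≤ u → HasDerivAt φ (φ' u) u) :
    IntervalIntegrable (fun t => exp t * ((1 + t) * φ t⁻¹ - t⁻¹ * φ' t⁻¹)) volume 0 1 ∧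
      ∫ t in (0:ℝ)..1, exp t * ((1 + t) * φ t⁻¹ - t⁻¹ * φ' t⁻¹) ≤ exp 1 * φ 1 := by
  have hderiv : ∀ t ∈ Ioc (0:ℝ) 1, HasDerivAt (fun t => exp t * (t * φ t⁻¹))
      (exp t * ((1 + t) * φ t⁻¹ - t⁻¹ * φ' t⁻¹)) t := fun t ht =>
    hasDerivAt_exp_mul_mul_apply_inv ht.1.ne' (hφ' _ ((one_le_inv₀ ht.1).2 ht.2))
  have hpos : ∀ t ∈ Ioo (0:ℝ) 1, 0 ≤ exp t * ((1 + t) * φ t⁻¹ - t⁻¹ * φ' t⁻¹) := by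
    intro t ⟨ht0, ht1⟩
    have hu : 1 ≤ t⁻¹ := (one_le_inv₀ ht0).2 ht1.le
    have htangent : φ' t⁻¹ ≤ slope φ 0 t⁻¹ :=
      hφ.le_slope_of_hasDerivAt self_mem_Ici (zero_le_one.trans hu) (inv_pos.2 ht0) (hφ' _ hu)
    rw [slope_def_field, hφ0, sub_zero, sub_zero, le_div_iff₀ (inv_pos.2 ht0)] at htangent
    have := mul_nonneg ht0.le (hφnn _ hu)
    exact mul_nonneg (exp_pos t).le (by nlinarith)
  obtain ⟨L, hL0, hL⟩ := hφ.exists_tendsto_mul_apply_inv_nhdsGT_zero hφ0 hφnn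
  have hlim₀ : Tendsto (fun t => exp t * (t * φ t⁻¹)) (𝓝[>] 0) (𝓝 (exp 0 * L)) :=
    (continuous_exp.continuousWithinAt.tendsto).mul hL
  have hint := intervalIntegrable_deriv_of_nonneg_of_tendsto zero_le_one
    (fun t ht => (hderiv t ht).continuousAt.continuousWithinAt)
    (fun t ht => hderiv t (Ioo_subset_Ioc_self ht)) hpos hlim₀
  refine ⟨hint, ?_⟩
  rw [intervalIntegral.integral_eq_sub_of_hasDerivAt_of_tendsto one_pos
    (fun t ht => hderiv t (Ioo_subset_Ioc_self ht)) hint hlim₀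
    (hderiv 1 (right_mem_Ioc.2 one_pos)).continuousAt.continuousWithinAt.tendsto]
  simp only [inv_one, one_mul, exp_zero]
  linarith

end Perspective

def expPerspectiveIntegral {E : Type*} [NormedAddCommGroup E] [NormedSpace ℝ E]
    (F : E → ℝ) (x : E) : ℝ :=
  ∫ t in (0:ℝ)..1, exp t * (t * F (t⁻¹ • x))

section Cone

variable {E : Type*} [NormedAddCommGroup E] [InnerProductSpace ℝ E] [CompleteSpace E]
  {S : Set E} {F : E → ℝ} {gF : E → E}

lemma ConcaveOn.sub_inv_mul_slope_le_sub_inner (hF : ConcaveOn ℝ S F) {x y g : E} {s t : ℝ}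
    (hs : 0 < s) (ht : 0 < t) (hx : t⁻¹ • x ∈ S) (hy : y ∈ S) (hz : t⁻¹ • (x + s • y) ∈ S)
    (hg : HasGradientAt F g (t⁻¹ • (x + s • y))) :
    F y - s⁻¹ * (t * (F (t⁻¹ • (x + s • y)) - F (t⁻¹ • x)))
      ≤ F (t⁻¹ • (x + s • y)) - t⁻¹ * ⟪g, x + s • y⟫ := by
  have hto_x := hF.le_add_inner_of_hasGradientAt hz hx hg
  have hto_y := hF.le_add_inner_of_hasGradientAt hz hy hg
  rw [show t⁻¹ • x - t⁻¹ • (x + s • y) = -(t⁻¹ * s) • y by module, inner_smul_right] at hto_x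
  rw [inner_sub_right, inner_smul_right] at hto_y
  have hslope : ⟪g, y⟫ ≤ s⁻¹ * (t * (F (t⁻¹ • (x + s • y)) - F (t⁻¹ • x))) := by
    rw [le_inv_mul_iff₀ hs]
    calc s * ⟪g, y⟫ = t * (t⁻¹ * s * ⟪g, y⟫) := by field_simp
      _ ≤ t * (F (t⁻¹ • (x + s • y)) - F (t⁻¹ • x)) := by gcongr; linarith
  linarith

theorem ConcaveOn.mul_sub_slope_expPerspectiveIntegral_le
    (hS : ∀ w ∈ S, ∀ v ∈ S, ∀ a b : ℝ, 0 ≤ a → 0 ≤ b → a • w + b • v ∈ S)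
    (hF : ConcaveOn ℝ S F) (hF0 : F 0 = 0) (hFnn : ∀ w ∈ S, 0 ≤ F w)
    (hgF : ∀ w ∈ S, HasGradientAt F (gF w) w) {x y : E} (hx : x ∈ S) (hy : y ∈ S)
    {s : ℝ} (hs : 0 < s) :
    (exp 1 - 1) * F y - (expPerspectiveIntegral F (x + s • y) - expPerspectiveIntegral F x) / s
      ≤ exp 1 * F (x + s • y) - expPerspectiveIntegral F (x + s • y) := by
  have hsmul : ∀ c : ℝ, 0 ≤ c → ∀ w ∈ S, c • w ∈ S := fun c hc w hw => by
    simpa using hS w hw w hw c 0 hc le_rfl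
  set z := x + s • y
  have hz : z ∈ S := by simpa using hS x hx y hy 1 s zero_le_one hs.le
  have hray : ∀ w ∈ S, ConcaveOn ℝ (Ici 0) (fun u : ℝ => F (u • w)) := fun w hw =>
    (hF.comp_linearMap (LinearMap.toSpanSingleton ℝ E w)).subset
      (fun c hc => hsmul c hc w hw) (convex_Ici 0)
  have hrayInt : ∀ w ∈ S, IntervalIntegrable (fun t => exp t * (t * F (t⁻¹ • w))) volume 0 1 :=
    fun w hw => (hray w hw).intervalIntegrable_exp_mul_mul_apply_inv (by simp [hF0])
      fun u hu => hFnn _ (hsmul u (zero_le_one.trans hu) w hw)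
  obtain ⟨hQint, hQle⟩ := (hray z hz).integral_exp_mul_deriv_perspective_le
    (φ' := fun u => ⟪gF (u • z), z⟫) (by simp [hF0])
    (fun u hu => hFnn _ (hsmul u (zero_le_one.trans hu) z hz))
    (fun u hu => by
      simpa using (hgF _ (hsmul u (zero_le_one.trans hu) z hz)).hasDerivAt_comp
        ((hasDerivAt_id u).smul_const z))
  have hpointwise : ∀ t ∈ Ioo (0:ℝ) 1,
      exp t * F y - s⁻¹ * (exp t * (t * F (t⁻¹ • z)) - exp t * (t * F (t⁻¹ • x)))
        ≤ exp t * ((1 + t) * F (t⁻¹ • z) - t⁻¹ * ⟪gF (t⁻¹ • z), z⟫)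
          - exp t * (t * F (t⁻¹ • z)) := by
    intro t ⟨ht, _⟩
    have hzt : t⁻¹ • z ∈ S := hsmul _ (inv_nonneg.2 ht.le) z hz
    calc _ = exp t * (F y - s⁻¹ * (t * (F (t⁻¹ • z) - F (t⁻¹ • x)))) := by ring
      _ ≤ exp t * (F (t⁻¹ • z) - t⁻¹ * ⟪gF (t⁻¹ • z), z⟫) :=
        mul_le_mul_of_nonneg_left (hF.sub_inv_mul_slope_le_sub_inner hs ht
          (hsmul _ (inv_nonneg.2 ht.le) x hx) hy hzt (hgF _ hzt)) (exp_pos t).le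
      _ = _ := by ring
  have hexpInt : IntervalIntegrable (fun t => exp t * F y) volume 0 1 :=
    (continuous_exp.mul continuous_const).intervalIntegrable 0 1
  have hdiffInt := ((hrayInt z hz).sub (hrayInt x hx)).const_mul s⁻¹
  have hmono := intervalIntegral.integral_mono_on_of_le_Ioo zero_le_one
    (hexpInt.sub hdiffInt) (hQint.sub (hrayInt z hz)) hpointwise
  rw [intervalIntegral.integral_sub hexpInt hdiffInt,
    intervalIntegral.integral_sub hQint (hrayInt z hz), intervalIntegral.integral_const_mul,
    intervalIntegral.integral_sub (hrayInt z hz) (hrayInt x hx),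
    intervalIntegral.integral_mul_const, integral_exp, exp_zero] at hmono
  simp only [one_smul] at hQle
  rw [div_eq_inv_mul]
  unfold expPerspectiveIntegral
  linarith

theorem ConcaveOn.inv_mul_expPerspectiveIntegral_add_sub_inner_le
    (hS : ∀ w ∈ S, ∀ v ∈ S, ∀ a b : ℝ, 0 ≤ a → 0 ≤ b → a • w + b • v ∈ S)
    (hF : ConcaveOn ℝ S F) (hF0 : F 0 = 0) (hFnn : ∀ w ∈ S, 0 ≤ F w)
    (hgF : ∀ w ∈ S, HasGradientAt F (gF w) w) {x y g : E} (hx : x ∈ S) (hy : y ∈ S)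
    (hU : HasGradientAt (fun w => (exp 1 - 1)⁻¹ * expPerspectiveIntegral F w) g x) :
    (exp 1 - 1)⁻¹ * expPerspectiveIntegral F x + (F y - ⟪g, y⟫) ≤ exp 1 / (exp 1 - 1) * F x := by
  set U := fun w => (exp 1 - 1)⁻¹ * expPerspectiveIntegral F w
  have hline : HasDerivAt (fun s : ℝ => x + s • y) y 0 := by
    simpa using ((hasDerivAt_id (0:ℝ)).smul_const y).const_add x
  have hUline : HasDerivAt (fun s : ℝ => U (x + s • y)) ⟪g, y⟫ 0 :=
    HasGradientAt.hasDerivAt_comp (by simpa using hU) hline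
  have hFline : HasDerivAt (fun s : ℝ => F (x + s • y)) ⟪gF x, y⟫ 0 :=
    HasGradientAt.hasDerivAt_comp (by simpa using hgF x hx) hline
  have hslope : Tendsto (slope (fun s : ℝ => U (x + s • y)) 0) (𝓝[>] 0) (𝓝 ⟪g, y⟫) :=
    (hasDerivAt_iff_tendsto_slope.1 hUline).mono_left
      (nhdsWithin_mono _ fun s (hs : (0:ℝ) < s) => hs.ne')
  have hUc := hUline.continuousAt.tendsto.mono_left (nhdsWithin_le_nhds (s := Ioi 0))
  have hFc := hFline.continuousAt.tendsto.mono_left (nhdsWithin_le_nhds (s := Ioi 0))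
  simp only [zero_smul, add_zero] at hUc hFc
  refine le_of_tendsto_of_tendsto (hUc.add (tendsto_const_nhds.sub hslope))
    (hFc.const_mul _) ?_
  filter_upwards [self_mem_nhdsWithin] with s (hs : (0:ℝ) < s)
  have key := hF.mul_sub_slope_expPerspectiveIntegral_le hS hF0 hFnn hgF hx hy hs
  have he : 0 < exp 1 - 1 := by linarith [add_one_lt_exp one_ne_zero]
  simp only [slope_def_field, U, zero_smul, add_zero, sub_zero]
  rw [← sub_nonneg] at key ⊢
  convert div_nonneg key he.le using 1
  field_simp
  ring

end Cone

theorem stmt14_general {m : ℕ} (f : EuclideanSpace ℝ (Fin m) → ℝ)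
    (gf : EuclideanSpace ℝ (Fin m) → EuclideanSpace ℝ (Fin m))
    (hf0 : f 0 = 0)
    (hconc : ConcaveOn ℝ {x : EuclideanSpace ℝ (Fin m) | ∀ i, 0 ≤ x i} f)
    (hnonneg : ∀ x : EuclideanSpace ℝ (Fin m), (∀ i, 0 ≤ x i) → 0 ≤ f x)
    (hgrad : ∀ y : EuclideanSpace ℝ (Fin m), (∀ i, 0 ≤ y i) → HasGradientAt f (gf y) y)
    (fhat : EuclideanSpace ℝ (Fin m) → ℝ)
    (hfhat : ∀ α, fhat α =
      sSup ((fun x => f x - ⟪α, x⟫) '' {x : EuclideanSpace ℝ (Fin m) | ∀ i, 0 ≤ x i}))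
    (U : EuclideanSpace ℝ (Fin m) → ℝ)
    (hU : ∀ x, U x = (Real.exp 1 - 1)⁻¹ *
      ∫ t in (0:ℝ)..1, Real.exp t * (t * f (t⁻¹ • x)))
    (gU : EuclideanSpace ℝ (Fin m) → EuclideanSpace ℝ (Fin m))
    (hgU : ∀ x : EuclideanSpace ℝ (Fin m), (∀ i, 0 ≤ x i) → HasGradientAt U (gU x) x) :
    ∀ x : EuclideanSpace ℝ (Fin m), (∀ i, 0 ≤ x i) →
      U x + fhat (gU x) ≤ (Real.exp 1 / (Real.exp 1 - 1)) * f x := by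
  intro x hx
  set S := {x : EuclideanSpace ℝ (Fin m) | ∀ i, 0 ≤ x i}
  have hS : ∀ w ∈ S, ∀ v ∈ S, ∀ a b : ℝ, 0 ≤ a → 0 ≤ b → a • w + b • v ∈ S :=
    fun w hw v hv a b ha hb i => by
      simpa using add_nonneg (mul_nonneg ha (hw i)) (mul_nonneg hb (hv i))
  obtain rfl : U = fun w => (Real.exp 1 - 1)⁻¹ * expPerspectiveIntegral f w := funext hU
  have hbound : ∀ y ∈ S, f y - ⟪gU x, y⟫ ≤ _ := fun y hy =>
    le_sub_iff_add_le'.2 <|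
      hconc.inv_mul_expPerspectiveIntegral_add_sub_inner_le hS hf0 hnonneg hgrad hx hy (hgU x hx)
  rw [hfhat, ← le_sub_iff_add_le']
  exact csSup_le (Set.Nonempty.image _ ⟨x, hx⟩) (forall_mem_image.2 hbound)

theorem stmt14 {m : ℕ} (f : EuclideanSpace ℝ (Fin m) → ℝ)
    (gf : EuclideanSpace ℝ (Fin m) → EuclideanSpace ℝ (Fin m))
    (hf0 : f 0 = 0)
    (hconc : ConcaveOn ℝ {x : EuclideanSpace ℝ (Fin m) | ∀ i, 0 ≤ x i} f)
    (hnonneg : ∀ x : EuclideanSpace ℝ (Fin m), (∀ i, 0 ≤ x i) → 0 ≤ f x)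
    (hmono : ∀ x y : EuclideanSpace ℝ (Fin m),
      (∀ i, 0 ≤ x i) → (∀ i, x i ≤ y i) → f x ≤ f y)
    (hgrad : ∀ y : EuclideanSpace ℝ (Fin m), (∀ i, 0 ≤ y i) → HasGradientAt f (gf y) y)
    (hganti : ∀ x y : EuclideanSpace ℝ (Fin m),
      (∀ i, 0 ≤ x i) → (∀ i, x i ≤ y i) → ∀ i, gf y i ≤ gf x i)
    (fhat : EuclideanSpace ℝ (Fin m) → ℝ)
    (hfhat : ∀ α, fhat α =
      sSup ((fun x => f x - ⟪α, x⟫) '' {x : EuclideanSpace ℝ (Fin m) | ∀ i, 0 ≤ x i}))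
    (U : EuclideanSpace ℝ (Fin m) → ℝ)
    (hU : ∀ x, U x = (Real.exp 1 - 1)⁻¹ *
      ∫ t in (0:ℝ)..1, Real.exp t * (t * f (t⁻¹ • x)))
    (gU : EuclideanSpace ℝ (Fin m) → EuclideanSpace ℝ (Fin m))
    (hgU : ∀ x : EuclideanSpace ℝ (Fin m), (∀ i, 0 ≤ x i) → HasGradientAt U (gU x) x) :
    ∀ x : EuclideanSpace ℝ (Fin m), (∀ i, 0 ≤ x i) →
      U x + fhat (gU x) ≤ (Real.exp 1 / (Real.exp 1 - 1)) * f x :=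
  stmt14_general f gf hf0 hconc hnonneg hgrad fhat hfhat U hU gU hgU
end
end

section
/- The greedy algorithm is (1/2)-competitive for concave diminishing-returns maximization: let f : ℝ_{≥0}^m → ℝ_{≥0} be a differentiable CDR-valuation (f(0)=0, concave, monotone, ∇f coordinatewise non-increasing). If x, x* ∈ ℝ_{≥0}^m with ⟨∇f(x), x⟩ ≥ ⟨∇f(x), x*⟩, then 2f(x) ≥ f(x*). -/
/-!
By concavity, `f` lies below its tangent hyperplane at `x`:
`f x* ≤ f x + ⟪∇f x, x* - x⟫`, and the greedy condition makes the inner product nonpositive.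
Hence `f x* ≤ f x`, which is at most `2 f x` since `f x ≥ 0`.
-/

open RealInnerProductSpace

theorem ConcaveOn.le_add_fderiv {E : Type*} [NormedAddCommGroup E] [NormedSpace ℝ E]
    {f : E → ℝ} {f' : E →L[ℝ] ℝ} {s : Set E} {x y : E} (hf : ConcaveOn ℝ s f)
    (hf' : HasFDerivAt f f' x) (hx : x ∈ s) (hy : y ∈ s) :
    f y ≤ f x + f' (y - x) := by
  let L : ℝ →ᵃ[ℝ] E := AffineMap.lineMap x y
  have hline : ConcaveOn ℝ (L ⁻¹' s) (f ∘ L) := hf.comp_affineMap L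
  have hderiv : HasDerivAt (f ∘ L) (f' (y - x)) 0 := by
    have hf'0 : HasFDerivAt f f' (L 0) := by simpa [L] using hf'
    exact hf'0.comp_hasDerivAt 0 AffineMap.hasDerivAt_lineMap
  have hslope := hline.slope_le_of_hasDerivAt (by simpa [L] using hx) (by simpa [L] using hy)
    zero_lt_one hderiv
  simp only [slope_def_field, Function.comp_apply, L, AffineMap.lineMap_apply_one,
    AffineMap.lineMap_apply_zero, sub_zero, div_one] at hslope
  linarith

theorem ConcaveOn.le_add_inner_gradient {E : Type*} [NormedAddCommGroup E]
    [InnerProductSpace ℝ E] [CompleteSpace E] {f : E → ℝ} {g : E} {s : Set E} {x y : E}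
    (hf : ConcaveOn ℝ s f) (hg : HasGradientAt f g x) (hx : x ∈ s) (hy : y ∈ s) :
    f y ≤ f x + ⟪g, y - x⟫ :=
  hf.le_add_fderiv hg.hasFDerivAt hx hy

theorem stmt18_general {m : ℕ} (f : EuclideanSpace ℝ (Fin m) → ℝ)
    (gf : EuclideanSpace ℝ (Fin m) → EuclideanSpace ℝ (Fin m))
    (hconc : ConcaveOn ℝ {x : EuclideanSpace ℝ (Fin m) | ∀ i, 0 ≤ x i} f)
    (hnonneg : ∀ x : EuclideanSpace ℝ (Fin m), (∀ i, 0 ≤ x i) → 0 ≤ f x)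
    (hgrad : ∀ y : EuclideanSpace ℝ (Fin m), (∀ i, 0 ≤ y i) → HasGradientAt f (gf y) y)
    (x xstar : EuclideanSpace ℝ (Fin m))
    (hx : ∀ i, 0 ≤ x i) (hxstar : ∀ i, 0 ≤ xstar i)
    (hgreedy : ⟪gf x, xstar⟫ ≤ ⟪gf x, x⟫) :
    f xstar ≤ 2 * f x := by
  have htangent : f xstar ≤ f x + ⟪gf x, xstar - x⟫ :=
    hconc.le_add_inner_gradient (hgrad x hx) hx hxstar
  rw [inner_sub_right] at htangent
  linarith [hnonneg x hx]

theorem stmt18 {m : ℕ} (f : EuclideanSpace ℝ (Fin m) → ℝ)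
    (gf : EuclideanSpace ℝ (Fin m) → EuclideanSpace ℝ (Fin m))
    (hf0 : f 0 = 0)
    (hconc : ConcaveOn ℝ {x : EuclideanSpace ℝ (Fin m) | ∀ i, 0 ≤ x i} f)
    (hnonneg : ∀ x : EuclideanSpace ℝ (Fin m), (∀ i, 0 ≤ x i) → 0 ≤ f x)
    (hmono : ∀ x y : EuclideanSpace ℝ (Fin m),
      (∀ i, 0 ≤ x i) → (∀ i, x i ≤ y i) → f x ≤ f y)
    (hgrad : ∀ y : EuclideanSpace ℝ (Fin m), (∀ i, 0 ≤ y i) → HasGradientAt f (gf y) y)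
    (hganti : ∀ x y : EuclideanSpace ℝ (Fin m),
      (∀ i, 0 ≤ x i) → (∀ i, x i ≤ y i) → ∀ i, gf y i ≤ gf x i)
    (x xstar : EuclideanSpace ℝ (Fin m))
    (hx : ∀ i, 0 ≤ x i) (hxstar : ∀ i, 0 ≤ xstar i)
    (hgreedy : ⟪gf x, xstar⟫ ≤ ⟪gf x, x⟫) :
    f xstar ≤ 2 * f x :=
  stmt18_general f gf hconc hnonneg hgrad x xstar hx hxstar hgreedy
end
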